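/- Let k_i > 0, 0 < h_{i2} < h_{i1}, η_i = h_{i1}h_{i2}/(h_{i1} − h_{i2}), R_i > 0, R^s_i > 0, q_i ∈ ℝ (i = 1,…,m), b_1,…,b_m ∈ ℝ^d, f ∈ ℝ^d. A tuple (u, c_e, c_p, c_s, γ₁, γ₂, Q) satisfies the system: (a) c_{e,i} + c_{p,i} + c_{s,i} = b_iᵀu; (b) Q_i = q_i + k_i c_{e,i}; (c) Σ_i Q_i b_i = f; (d) R_i + h_{i1} γ_{1,i} ≥ |Q_i|, γ_{1,i} ≥ |c_{p,i}|, (R_i + h_{i1}γ_{1,i})·γ_{1,i} − Q_i·c_{p,i} = 0; (e) R^s_i + η_i γ_{2,i} ≥ |Q_i|, γ_{2,i} ≥ |c_{s,i}|, (R^s_i + η_i γ_{2,i})·γ_{2,i} − Q_i·c_{s,i} = 0, for all i; if and only if (u, c_e, c_p, c_s, γ₁, γ₂) is a global optimal solution of the convex problem (Ppw): minimize Σ_i (q_i c_{e,i} + ½ k_i c_{e,i}²) + Σ_i (R_i γ_{1,i} + ½ h_{i1} γ_{1,i}² + R^s_i γ_{2,i} + ½ η_i γ_{2,i}²) − fᵀu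 subject to c_{e,i} + c_{p,i} + c_{s,i} = b_iᵀu, γ_{1,i} ≥ |c_{p,i}|, and γ_{2,i} ≥ |c_{s,i}| for all i, with Q given by (b). -/
import Mathlib


open Finset

/-- Feasibility for the piecewise-linear hardening problem (Ppw). -/
def PpwFeasible (m d : ℕ) (b : Fin m → Fin d → ℝ)
    (u : Fin d → ℝ) (ce cp cs γ₁ γ₂ : Fin m → ℝ) : Prop :=
  (∀ i, ce i + cp i + cs i = ∑ j, b i j * u j)
    ∧ (∀ i, γ₁ i ≥ |cp i|) ∧ (∀ i, γ₂ i ≥ |cs i|)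

/-- Objective of the piecewise-linear hardening problem (Ppw). -/
noncomputable def PpwObj (m d : ℕ) (k h1 η R Rs q : Fin m → ℝ) (f : Fin d → ℝ)
    (u : Fin d → ℝ) (ce cp cs γ₁ γ₂ : Fin m → ℝ) : ℝ :=
  (∑ i, (q i * ce i + (1/2) * k i * (ce i)^2))
    + (∑ i, (R i * γ₁ i + (1/2) * h1 i * (γ₁ i)^2
        + Rs i * γ₂ i + (1/2) * η i * (γ₂ i)^2))
    - ∑ j, f j * u j



lemma key_nonneg (g a : ℝ) (h : ∀ t : ℝ, 0 < t → t ≤ 1 → 0 ≤ g * t + a * t ^ 2) :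
    0 ≤ g := by
  by_contra hg
  push_neg at hg
  set t := min 1 (-g / (2 * (|a| + 1))) with ht
  have hapos : (0:ℝ) < |a| + 1 := by positivity
  have htpos : 0 < t := lt_min one_pos (div_pos (by linarith) (by positivity))
  have ht1 : t ≤ 1 := min_le_left _ _
  have h2 : t ≤ -g / (2 * (|a| + 1)) := min_le_right _ _
  have hta := h t htpos ht1
  have hat : a * t ≤ -g / 2 := by
    calc a * t ≤ |a| * t := mul_le_mul_of_nonneg_right (le_abs_self a) htpos.le
      _ ≤ |a| * (-g / (2 * (|a| + 1))) := mul_le_mul_of_nonneg_left h2 (abs_nonneg a)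
      _ ≤ -g / 2 := by
          rw [mul_div_assoc', div_le_div_iff₀ (by positivity) two_pos]
          nlinarith [abs_nonneg a]
  have hlt : g * t + a * t ^ 2 ≤ t * (g / 2) := by nlinarith
  have : t * (g / 2) < 0 := mul_neg_of_pos_of_neg htpos (by linarith)
  linarith

lemma quad_abs_zero (g a : ℝ) (h : ∀ t : ℝ, |t| ≤ 1 → 0 ≤ g * t + a * t ^ 2) :
    g = 0 := by
  have h1 : 0 ≤ g := key_nonneg g a fun t ht ht1 =>
    h t (by rw [abs_of_pos ht]; exact ht1)
  have h2 : 0 ≤ -g := key_nonneg (-g) a fun t ht ht1 => by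
    have := h (-t) (by rw [abs_neg, abs_of_pos ht]; exact ht1)
    nlinarith
  linarith

lemma sum_fun_sub {m : ℕ} (F G : Fin m → ℝ) (i₀ : Fin m)
    (h : ∀ i, i ≠ i₀ → F i = G i) : ∑ i, F i - ∑ i, G i = F i₀ - G i₀ := by
  rw [← Finset.sum_sub_distrib]
  rw [Finset.sum_eq_single i₀ (fun i _ hi => by rw [h i hi]; ring)
    (fun h' => absurd (Finset.mem_univ i₀) h')]

lemma branch_ineq (Rq h γ γ' c c' Qv : ℝ) (hh : 0 ≤ h)
    (hge : Rq + h * γ ≥ |Qv|) (hγ' : γ' ≥ |c'|)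
    (hcomp : (Rq + h * γ) * γ - Qv * c = 0) :
    Qv * (c' - c) ≤ Rq * (γ' - γ) + (1/2) * h * (γ' ^ 2 - γ ^ 2) := by
  have h1 : Qv * c' ≤ |Qv| * |c'| := (le_abs_self _).trans (abs_mul Qv c').le
  have h2 : |Qv| * |c'| ≤ (Rq + h * γ) * γ' :=
    mul_le_mul hge hγ' (abs_nonneg c') ((abs_nonneg Qv).trans hge)
  nlinarith [mul_nonneg hh (sq_nonneg (γ' - γ))]

lemma obj_diff (m d : ℕ) (k h1 η R Rs q : Fin m → ℝ) (f : Fin d → ℝ) (u : Fin d → ℝ)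
    (ce cp cs γ₁ γ₂ ce' cp' cs' γ₁' γ₂' : Fin m → ℝ) (i₀ : Fin m)
    (hce : ∀ i, i ≠ i₀ → ce' i = ce i) (hγ1 : ∀ i, i ≠ i₀ → γ₁' i = γ₁ i)
    (hγ2 : ∀ i, i ≠ i₀ → γ₂' i = γ₂ i) :
    PpwObj m d k h1 η R Rs q f u ce' cp' cs' γ₁' γ₂'
      - PpwObj m d k h1 η R Rs q f u ce cp cs γ₁ γ₂
    = (q i₀ * ce' i₀ + (1/2) * k i₀ * (ce' i₀)^2
        - (q i₀ * ce i₀ + (1/2) * k i₀ * (ce i₀)^2))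
      + (R i₀ * γ₁' i₀ + (1/2) * h1 i₀ * (γ₁' i₀)^2
          + Rs i₀ * γ₂' i₀ + (1/2) * η i₀ * (γ₂' i₀)^2
        - (R i₀ * γ₁ i₀ + (1/2) * h1 i₀ * (γ₁ i₀)^2
          + Rs i₀ * γ₂ i₀ + (1/2) * η i₀ * (γ₂ i₀)^2)) := by
  simp only [PpwObj]
  have hA := sum_fun_sub (fun i => q i * ce' i + (1/2) * k i * (ce' i)^2)
    (fun i => q i * ce i + (1/2) * k i * (ce i)^2) i₀
    (fun i hi => by simp only [hce i hi])
  have hB := sum_fun_sub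
    (fun i => R i * γ₁' i + (1/2) * h1 i * (γ₁' i)^2
        + Rs i * γ₂' i + (1/2) * η i * (γ₂' i)^2)
    (fun i => R i * γ₁ i + (1/2) * h1 i * (γ₁ i)^2
        + Rs i * γ₂ i + (1/2) * η i * (γ₂ i)^2) i₀
    (fun i hi => by simp only [hγ1 i hi, hγ2 i hi])
  linarith


lemma ppw_forward (m d : ℕ)
    (k h1 h2 η R Rs q : Fin m → ℝ)
    (hk : ∀ i, 0 < k i) (hh2 : ∀ i, 0 < h2 i) (hh12 : ∀ i, h2 i < h1 i)
    (hη : ∀ i, η i = h1 i * h2 i / (h1 i - h2 i))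
    (hR : ∀ i, 0 < R i) (hRs : ∀ i, 0 < Rs i)
    (b : Fin m → Fin d → ℝ) (f : Fin d → ℝ)
    (u : Fin d → ℝ) (ce cp cs γ₁ γ₂ Q : Fin m → ℝ)
    (ha : ∀ i, ce i + cp i + cs i = ∑ j, b i j * u j)
    (hb : ∀ i, Q i = q i + k i * ce i)
    (hc : ∀ j, ∑ i, Q i * b i j = f j)
    (hd : ∀ i, R i + h1 i * γ₁ i ≥ |Q i| ∧ γ₁ i ≥ |cp i|
          ∧ (R i + h1 i * γ₁ i) * γ₁ i - Q i * cp i = 0)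
    (he : ∀ i, Rs i + η i * γ₂ i ≥ |Q i| ∧ γ₂ i ≥ |cs i|
          ∧ (Rs i + η i * γ₂ i) * γ₂ i - Q i * cs i = 0) :
    PpwFeasible m d b u ce cp cs γ₁ γ₂ ∧
      ∀ (u' : Fin d → ℝ) (ce' cp' cs' γ₁' γ₂' : Fin m → ℝ),
        PpwFeasible m d b u' ce' cp' cs' γ₁' γ₂' →
        PpwObj m d k h1 η R Rs q f u ce cp cs γ₁ γ₂
          ≤ PpwObj m d k h1 η R Rs q f u' ce' cp' cs' γ₁' γ₂' := by
  have hh1pos : ∀ i, (0:ℝ) < h1 i := fun i => (hh2 i).trans (hh12 i)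
  have hηpos : ∀ i, (0:ℝ) < η i := fun i => by
    rw [hη i]; exact div_pos (mul_pos (hh1pos i) (hh2 i)) (by linarith [hh12 i])
  refine ⟨⟨ha, fun i => (hd i).2.1, fun i => (he i).2.1⟩, ?_⟩
  intro u' ce' cp' cs' γ₁' γ₂' hfeas
  obtain ⟨ha', hγ1', hγ2'⟩ := hfeas
  -- f-part rewriting
  have hsum : ∑ j, f j * u' j - ∑ j, f j * u j
      = ∑ i, Q i * ((ce' i + cp' i + cs' i) - (ce i + cp i + cs i)) := by
    have e1 : ∑ j, f j * u' j - ∑ j, f j * u j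
        = ∑ j, ∑ i, Q i * b i j * (u' j - u j) := by
      rw [← Finset.sum_sub_distrib]
      refine Finset.sum_congr rfl fun j _ => ?_
      rw [← Finset.sum_mul, hc j]; ring
    rw [e1, Finset.sum_comm]
    refine Finset.sum_congr rfl fun i _ => ?_
    have : ∑ j, Q i * b i j * (u' j - u j)
        = Q i * (∑ j, b i j * u' j - ∑ j, b i j * u j) := by
      rw [← Finset.sum_sub_distrib, Finset.mul_sum]
      exact Finset.sum_congr rfl fun j _ => by ring
    rw [this, ← ha' i, ← ha i]
  -- per-index inequality
  have key : ∀ i,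
      Q i * ((ce' i + cp' i + cs' i) - (ce i + cp i + cs i))
      ≤ (q i * ce' i + (1/2) * k i * (ce' i)^2
          + R i * γ₁' i + (1/2) * h1 i * (γ₁' i)^2
          + Rs i * γ₂' i + (1/2) * η i * (γ₂' i)^2)
        - (q i * ce i + (1/2) * k i * (ce i)^2
          + R i * γ₁ i + (1/2) * h1 i * (γ₁ i)^2
          + Rs i * γ₂ i + (1/2) * η i * (γ₂ i)^2) := by
    intro i
    obtain ⟨hd1, hd2, hd3⟩ := hd i
    obtain ⟨he1, he2, he3⟩ := he i
    have b1 := branch_ineq (R i) (h1 i) (γ₁ i) (γ₁' i) (cp i) (cp' i) (Q i)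
      (hh1pos i).le hd1 (hγ1' i) hd3
    have b2 := branch_ineq (Rs i) (η i) (γ₂ i) (γ₂' i) (cs i) (cs' i) (Q i)
      (hηpos i).le he1 (hγ2' i) he3
    have b3 : Q i * (ce' i - ce i)
        ≤ q i * ce' i + (1/2) * k i * (ce' i)^2
          - (q i * ce i + (1/2) * k i * (ce i)^2) := by
      rw [hb i]
      nlinarith [mul_nonneg (hk i).le (sq_nonneg (ce' i - ce i))]
    nlinarith [b1, b2, b3]
  -- assemble
  have hsum2 : ∑ i, Q i * ((ce' i + cp' i + cs' i) - (ce i + cp i + cs i))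
      ≤ ∑ i, ((q i * ce' i + (1/2) * k i * (ce' i)^2
          + R i * γ₁' i + (1/2) * h1 i * (γ₁' i)^2
          + Rs i * γ₂' i + (1/2) * η i * (γ₂' i)^2)
        - (q i * ce i + (1/2) * k i * (ce i)^2
          + R i * γ₁ i + (1/2) * h1 i * (γ₁ i)^2
          + Rs i * γ₂ i + (1/2) * η i * (γ₂ i)^2)) :=
    Finset.sum_le_sum fun i _ => key i
  rw [Finset.sum_sub_distrib] at hsum2
  simp only [PpwObj]
  have expand : ∀ (x y z w v : Fin m → ℝ) , True := fun _ _ _ _ _ => trivial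
  have e2 : ∑ i, (q i * ce' i + (1/2) * k i * (ce' i)^2
          + R i * γ₁' i + (1/2) * h1 i * (γ₁' i)^2
          + Rs i * γ₂' i + (1/2) * η i * (γ₂' i)^2)
      = (∑ i, (q i * ce' i + (1/2) * k i * (ce' i)^2))
        + ∑ i, (R i * γ₁' i + (1/2) * h1 i * (γ₁' i)^2
            + Rs i * γ₂' i + (1/2) * η i * (γ₂' i)^2) := by
    rw [← Finset.sum_add_distrib]
    exact Finset.sum_congr rfl fun i _ => by ring
  have e3 : ∑ i, (q i * ce i + (1/2) * k i * (ce i)^2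
          + R i * γ₁ i + (1/2) * h1 i * (γ₁ i)^2
          + Rs i * γ₂ i + (1/2) * η i * (γ₂ i)^2)
      = (∑ i, (q i * ce i + (1/2) * k i * (ce i)^2))
        + ∑ i, (R i * γ₁ i + (1/2) * h1 i * (γ₁ i)^2
            + Rs i * γ₂ i + (1/2) * η i * (γ₂ i)^2) := by
    rw [← Finset.sum_add_distrib]
    exact Finset.sum_congr rfl fun i _ => by ring
  rw [e2, e3] at hsum2
  linarith [hsum, hsum2]

lemma ppw_backward (m d : ℕ)
    (k h1 h2 η R Rs q : Fin m → ℝ)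
    (hk : ∀ i, 0 < k i) (hh2 : ∀ i, 0 < h2 i) (hh12 : ∀ i, h2 i < h1 i)
    (hη : ∀ i, η i = h1 i * h2 i / (h1 i - h2 i))
    (hR : ∀ i, 0 < R i) (hRs : ∀ i, 0 < Rs i)
    (b : Fin m → Fin d → ℝ) (f : Fin d → ℝ)
    (u : Fin d → ℝ) (ce cp cs γ₁ γ₂ Q : Fin m → ℝ)
    (hfe : PpwFeasible m d b u ce cp cs γ₁ γ₂)
    (hopt : ∀ (u' : Fin d → ℝ) (ce' cp' cs' γ₁' γ₂' : Fin m → ℝ),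
        PpwFeasible m d b u' ce' cp' cs' γ₁' γ₂' →
        PpwObj m d k h1 η R Rs q f u ce cp cs γ₁ γ₂
          ≤ PpwObj m d k h1 η R Rs q f u' ce' cp' cs' γ₁' γ₂')
    (hbQ : ∀ i, Q i = q i + k i * ce i) :
    ((∀ i, ce i + cp i + cs i = ∑ j, b i j * u j)
      ∧ (∀ i, Q i = q i + k i * ce i)
      ∧ (∀ j, ∑ i, Q i * b i j = f j)
      ∧ (∀ i, R i + h1 i * γ₁ i ≥ |Q i| ∧ γ₁ i ≥ |cp i|
          ∧ (R i + h1 i * γ₁ i) * γ₁ i - Q i * cp i = 0)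
      ∧ (∀ i, Rs i + η i * γ₂ i ≥ |Q i| ∧ γ₂ i ≥ |cs i|
          ∧ (Rs i + η i * γ₂ i) * γ₂ i - Q i * cs i = 0)) := by
  have hh1pos : ∀ i, (0:ℝ) < h1 i := fun i => (hh2 i).trans (hh12 i)
  have hηpos : ∀ i, (0:ℝ) < η i := fun i => by
    rw [hη i]; exact div_pos (mul_pos (hh1pos i) (hh2 i)) (by linarith [hh12 i])
  obtain ⟨ha, hγ1, hγ2⟩ := hfe
  -- equilibrium (c)
  have hcEq : ∀ j₀, ∑ i, Q i * b i j₀ = f j₀ := by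
    intro j₀
    have hq : ∀ t : ℝ, |t| ≤ 1 →
        0 ≤ ((∑ i, Q i * b i j₀) - f j₀) * t + (∑ i, (1/2) * k i * (b i j₀)^2) * t^2 := by
      intro t _
      set u' : Fin d → ℝ := fun j => u j + (if j = j₀ then t else 0) with hu'
      set ce' : Fin m → ℝ := fun i => ce i + b i j₀ * t with hce'
      have hitesum : ∀ i, ∑ j, b i j * (if j = j₀ then t else 0) = b i j₀ * t := by
        intro i
        rw [Finset.sum_eq_single j₀ (fun jj _ hjj => by simp [hjj])
          (fun h' => absurd (Finset.mem_univ j₀) h')]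
        simp
      have hf : PpwFeasible m d b u' ce' cp cs γ₁ γ₂ := by
        refine ⟨fun i => ?_, hγ1, hγ2⟩
        simp only [hu', hce', mul_add]
        rw [Finset.sum_add_distrib, hitesum i, ← ha i]
        ring
      have hle := hopt u' ce' cp cs γ₁ γ₂ hf
      have hA : ∑ i, (q i * ce' i + (1/2) * k i * (ce' i)^2)
          = (∑ i, (q i * ce i + (1/2) * k i * (ce i)^2))
            + (∑ i, Q i * b i j₀) * t + (∑ i, (1/2) * k i * (b i j₀)^2) * t^2 := by
        rw [Finset.sum_mul, Finset.sum_mul, ← Finset.sum_add_distrib, ← Finset.sum_add_distrib]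
        refine Finset.sum_congr rfl fun i _ => ?_
        simp only [hce']
        rw [hbQ i]; ring
      have hU : ∑ j, f j * u' j = (∑ j, f j * u j) + f j₀ * t := by
        simp only [hu', mul_add]
        rw [Finset.sum_add_distrib]
        congr 1
        rw [Finset.sum_eq_single j₀ (fun jj _ hjj => by simp [hjj])
          (fun h' => absurd (Finset.mem_univ j₀) h')]
        simp
      simp only [PpwObj] at hle
      rw [hA, hU] at hle
      nlinarith [hle]
    have := quad_abs_zero _ _ hq
    linarith
  -- branch 1 conditions (d)
  have hd : ∀ i₀, R i₀ + h1 i₀ * γ₁ i₀ ≥ |Q i₀| ∧ γ₁ i₀ ≥ |cp i₀|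
      ∧ (R i₀ + h1 i₀ * γ₁ i₀) * γ₁ i₀ - Q i₀ * cp i₀ = 0 := by
    intro i₀
    have habs : ∀ σ : ℝ, |σ| ≤ 1 → 0 ≤ R i₀ + h1 i₀ * γ₁ i₀ - σ * Q i₀ := by
      intro σ hσ
      refine key_nonneg _ ((1/2) * k i₀ * σ^2 + (1/2) * h1 i₀) (fun t ht ht1 => ?_)
      set ce' := Function.update ce i₀ (ce i₀ - t * σ) with hce'
      set cp' := Function.update cp i₀ (cp i₀ + t * σ) with hcp'
      set γ₁' := Function.update γ₁ i₀ (γ₁ i₀ + t) with hγ₁'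
      have hf : PpwFeasible m d b u ce' cp' cs γ₁' γ₂ := by
        refine ⟨fun i => ?_, fun i => ?_, hγ2⟩
        · by_cases hi : i = i₀
          · simp only [hi, hce', hcp', Function.update_self]
            rw [← ha i₀]; ring
          · simp only [hce', hcp', Function.update_of_ne hi]
            exact ha i
        · by_cases hi : i = i₀
          · simp only [hi, hcp', hγ₁', Function.update_self]
            calc |cp i₀ + t * σ| ≤ |cp i₀| + |t * σ| := abs_add_le _ _
              _ ≤ |cp i₀| + t := by
                  rw [abs_mul, abs_of_pos ht]
                  nlinarith [hσ, ht]
              _ ≤ γ₁ i₀ + t := by linarith [hγ1 i₀]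
          · simp only [hcp', hγ₁', Function.update_of_ne hi]
            exact hγ1 i
      have hle := hopt u ce' cp' cs γ₁' γ₂ hf
      have hdiff := obj_diff m d k h1 η R Rs q f u ce cp cs γ₁ γ₂ ce' cp' cs γ₁' γ₂ i₀
        (fun i hi => Function.update_of_ne hi _ _)
        (fun i hi => Function.update_of_ne hi _ _)
        (fun i _ => rfl)
      simp only [hce', hγ₁', Function.update_self] at hdiff
      rw [hbQ i₀]
      nlinarith [hle, hdiff]
    refine ⟨?_, hγ1 i₀, ?_⟩
    · have h1' := habs 1 (by norm_num)
      have h2' := habs (-1) (by norm_num)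
      rw [ge_iff_le, abs_le]
      constructor <;> linarith
    · have hq : ∀ t : ℝ, |t| ≤ 1 →
          0 ≤ ((R i₀ + h1 i₀ * γ₁ i₀) * γ₁ i₀ - Q i₀ * cp i₀) * t
            + ((1/2) * k i₀ * (cp i₀)^2 + (1/2) * h1 i₀ * (γ₁ i₀)^2) * t^2 := by
        intro t ht
        set ce' := Function.update ce i₀ (ce i₀ - t * cp i₀) with hce'
        set cp' := Function.update cp i₀ ((1 + t) * cp i₀) with hcp'
        set γ₁' := Function.update γ₁ i₀ ((1 + t) * γ₁ i₀) with hγ₁'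
        have h1t : (0:ℝ) ≤ 1 + t := by
          have := abs_le.1 ht; linarith [this.1]
        have hf : PpwFeasible m d b u ce' cp' cs γ₁' γ₂ := by
          refine ⟨fun i => ?_, fun i => ?_, hγ2⟩
          · by_cases hi : i = i₀
            · simp only [hi, hce', hcp', Function.update_self]
              rw [← ha i₀]; ring
            · simp only [hce', hcp', Function.update_of_ne hi]
              exact ha i
          · by_cases hi : i = i₀
            · simp only [hi, hcp', hγ₁', Function.update_self]
              rw [abs_mul, abs_of_nonneg h1t]
              exact mul_le_mul_of_nonneg_left (hγ1 i₀) h1t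
            · simp only [hcp', hγ₁', Function.update_of_ne hi]
              exact hγ1 i
        have hle := hopt u ce' cp' cs γ₁' γ₂ hf
        have hdiff := obj_diff m d k h1 η R Rs q f u ce cp cs γ₁ γ₂ ce' cp' cs γ₁' γ₂ i₀
          (fun i hi => Function.update_of_ne hi _ _)
          (fun i hi => Function.update_of_ne hi _ _)
          (fun i _ => rfl)
        simp only [hce', hγ₁', Function.update_self] at hdiff
        rw [hbQ i₀]
        nlinarith [hle, hdiff]
      exact quad_abs_zero _ _ hq
  -- branch 2 conditions (e)
  have he : ∀ i₀, Rs i₀ + η i₀ * γ₂ i₀ ≥ |Q i₀| ∧ γ₂ i₀ ≥ |cs i₀|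
      ∧ (Rs i₀ + η i₀ * γ₂ i₀) * γ₂ i₀ - Q i₀ * cs i₀ = 0 := by
    intro i₀
    have habs : ∀ σ : ℝ, |σ| ≤ 1 → 0 ≤ Rs i₀ + η i₀ * γ₂ i₀ - σ * Q i₀ := by
      intro σ hσ
      refine key_nonneg _ ((1/2) * k i₀ * σ^2 + (1/2) * η i₀) (fun t ht ht1 => ?_)
      set ce' := Function.update ce i₀ (ce i₀ - t * σ) with hce'
      set cs' := Function.update cs i₀ (cs i₀ + t * σ) with hcs'
      set γ₂' := Function.update γ₂ i₀ (γ₂ i₀ + t) with hγ₂'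
      have hf : PpwFeasible m d b u ce' cp cs' γ₁ γ₂' := by
        refine ⟨fun i => ?_, hγ1, fun i => ?_⟩
        · by_cases hi : i = i₀
          · simp only [hi, hce', hcs', Function.update_self]
            rw [← ha i₀]; ring
          · simp only [hce', hcs', Function.update_of_ne hi]
            exact ha i
        · by_cases hi : i = i₀
          · simp only [hi, hcs', hγ₂', Function.update_self]
            calc |cs i₀ + t * σ| ≤ |cs i₀| + |t * σ| := abs_add_le _ _
              _ ≤ |cs i₀| + t := by
                  rw [abs_mul, abs_of_pos ht]
                  nlinarith [hσ, ht]
              _ ≤ γ₂ i₀ + t := by linarith [hγ2 i₀]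
          · simp only [hcs', hγ₂', Function.update_of_ne hi]
            exact hγ2 i
      have hle := hopt u ce' cp cs' γ₁ γ₂' hf
      have hdiff := obj_diff m d k h1 η R Rs q f u ce cp cs γ₁ γ₂ ce' cp cs' γ₁ γ₂' i₀
        (fun i hi => Function.update_of_ne hi _ _)
        (fun i _ => rfl)
        (fun i hi => Function.update_of_ne hi _ _)
      simp only [hce', hγ₂', Function.update_self] at hdiff
      rw [hbQ i₀]
      nlinarith [hle, hdiff]
    refine ⟨?_, hγ2 i₀, ?_⟩
    · have h1' := habs 1 (by norm_num)
      have h2' := habs (-1) (by norm_num)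
      rw [ge_iff_le, abs_le]
      constructor <;> linarith
    · have hq : ∀ t : ℝ, |t| ≤ 1 →
          0 ≤ ((Rs i₀ + η i₀ * γ₂ i₀) * γ₂ i₀ - Q i₀ * cs i₀) * t
            + ((1/2) * k i₀ * (cs i₀)^2 + (1/2) * η i₀ * (γ₂ i₀)^2) * t^2 := by
        intro t ht
        set ce' := Function.update ce i₀ (ce i₀ - t * cs i₀) with hce'
        set cs' := Function.update cs i₀ ((1 + t) * cs i₀) with hcs'
        set γ₂' := Function.update γ₂ i₀ ((1 + t) * γ₂ i₀) with hγ₂'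
        have h1t : (0:ℝ) ≤ 1 + t := by
          have := abs_le.1 ht; linarith [this.1]
        have hf : PpwFeasible m d b u ce' cp cs' γ₁ γ₂' := by
          refine ⟨fun i => ?_, hγ1, fun i => ?_⟩
          · by_cases hi : i = i₀
            · simp only [hi, hce', hcs', Function.update_self]
              rw [← ha i₀]; ring
            · simp only [hce', hcs', Function.update_of_ne hi]
              exact ha i
          · by_cases hi : i = i₀
            · simp only [hi, hcs', hγ₂', Function.update_self]
              rw [abs_mul, abs_of_nonneg h1t]
              exact mul_le_mul_of_nonneg_left (hγ2 i₀) h1t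
            · simp only [hcs', hγ₂', Function.update_of_ne hi]
              exact hγ2 i
        have hle := hopt u ce' cp cs' γ₁ γ₂' hf
        have hdiff := obj_diff m d k h1 η R Rs q f u ce cp cs γ₁ γ₂ ce' cp cs' γ₁ γ₂' i₀
          (fun i hi => Function.update_of_ne hi _ _)
          (fun i _ => rfl)
          (fun i hi => Function.update_of_ne hi _ _)
        simp only [hce', hγ₂', Function.update_self] at hdiff
        rw [hbQ i₀]
        nlinarith [hle, hdiff]
      exact quad_abs_zero _ _ hq
  exact ⟨ha, hbQ, hcEq, hd, he⟩

/-- the second-order cone linear complementarity system (a)–(e)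
of the piecewise-linear hardening incremental problem holds iff
`(u, c_e, c_p, c_s, γ₁, γ₂)` is a global optimal solution of (Ppw) and `Q` is
given by the constitutive law (b). -/
theorem piecewise_soclcp_iff_optimal (m d : ℕ)
    (k h1 h2 η R Rs q : Fin m → ℝ)
    (hk : ∀ i, 0 < k i) (hh2 : ∀ i, 0 < h2 i) (hh12 : ∀ i, h2 i < h1 i)
    (hη : ∀ i, η i = h1 i * h2 i / (h1 i - h2 i))
    (hR : ∀ i, 0 < R i) (hRs : ∀ i, 0 < Rs i)
    (b : Fin m → Fin d → ℝ) (f : Fin d → ℝ)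
    (u : Fin d → ℝ) (ce cp cs γ₁ γ₂ Q : Fin m → ℝ) :
    ((∀ i, ce i + cp i + cs i = ∑ j, b i j * u j)
      ∧ (∀ i, Q i = q i + k i * ce i)
      ∧ (∀ j, ∑ i, Q i * b i j = f j)
      ∧ (∀ i, R i + h1 i * γ₁ i ≥ |Q i| ∧ γ₁ i ≥ |cp i|
          ∧ (R i + h1 i * γ₁ i) * γ₁ i - Q i * cp i = 0)
      ∧ (∀ i, Rs i + η i * γ₂ i ≥ |Q i| ∧ γ₂ i ≥ |cs i|
          ∧ (Rs i + η i * γ₂ i) * γ₂ i - Q i * cs i = 0))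
    ↔ ((PpwFeasible m d b u ce cp cs γ₁ γ₂ ∧
          ∀ (u' : Fin d → ℝ) (ce' cp' cs' γ₁' γ₂' : Fin m → ℝ),
            PpwFeasible m d b u' ce' cp' cs' γ₁' γ₂' →
            PpwObj m d k h1 η R Rs q f u ce cp cs γ₁ γ₂
              ≤ PpwObj m d k h1 η R Rs q f u' ce' cp' cs' γ₁' γ₂')
        ∧ (∀ i, Q i = q i + k i * ce i)) := by
  constructor
  · rintro ⟨ha, hb, hc, hd, he⟩
    obtain ⟨hfe, hopt⟩ := ppw_forward m d k h1 h2 η R Rs q hk hh2 hh12 hη hR hRs b f u ce cp cs γ₁ γ₂ Q ha hb hc hd he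
    exact ⟨⟨hfe, hopt⟩, hb⟩
  · rintro ⟨⟨hfe, hopt⟩, hbQ⟩
    exact ppw_backward m d k h1 h2 η R Rs q hk hh2 hh12 hη hR hRs b f u ce cp cs γ₁ γ₂ Q hfe hopt hbQ
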